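/- arXiv:1901.01984 — 10 statements merged into one kernel-verified Lean document; each statement's English description precedes it below -/
import Mathlib

section
/- Let H be a complex Hilbert space, G a selfadjoint continuous linear operator on H, h a nonzero real number, and K : ℝ → (H →L[ℂ] H) a family of continuous linear operators such that K(x) is selfadjoint for every x ∈ ℝ. If ψ₁, ψ₂ : ℝ → H are differentiable and satisfy the Schroedinger-type equation K(x)(ψⱼ(x)) = −i·h·G(ψⱼ'(x)) for all x ∈ ℝ and j = 1, 2, then the function x ↦ ⟪ψ₁(x), G(ψ₂(x))⟫ is constant on ℝ. -/
/-!
Since `K(x)` and `G` are selfadjoint and the coefficient `a = -i h` is purely imaginary,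
`a ⟪ψ₁, G ψ₂'⟫ = ⟪ψ₁, K ψ₂⟫ = ⟪K ψ₁, ψ₂⟫ = conj a ⟪G ψ₁', ψ₂⟫ = -a ⟪ψ₁', G ψ₂⟫`.
As `a ≠ 0`, the two terms of the product rule for `(ψ₁, G ψ₂)'` cancel, so the derivative vanishes
everywhere and the function is constant.
-/

open scoped InnerProductSpace ComplexInnerProductSpace

section

variable {𝕜 E : Type*} [RCLike 𝕜] [NormedAddCommGroup E] [InnerProductSpace 𝕜 E]

theorem HasDerivAt.inner_clm_apply [NormedSpace ℝ E] [IsScalarTower ℝ 𝕜 E]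
    {u v : ℝ → E} {u' v' : E} {x : ℝ} (A : E →L[𝕜] E)
    (hu : HasDerivAt u u' x) (hv : HasDerivAt v v' x) :
    HasDerivAt (fun t => ⟪u t, A (v t)⟫_𝕜) (⟪u x, A v'⟫_𝕜 + ⟪u', A (v x)⟫_𝕜) x :=
  hu.inner 𝕜 ((A.restrictScalars ℝ).hasFDerivAt.comp_hasDerivAt x hv)

theorem inner_add_inner_eq_zero_of_symmetric_eq_smul {G K : E →ₗ[𝕜] E}
    (hG : G.IsSymmetric) (hK : K.IsSymmetric) {a : 𝕜} (ha : a ≠ 0)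
    (ha_conj : (starRingEnd 𝕜) a = -a) {u v u' v' : E}
    (hu : K u = a • G u') (hv : K v = a • G v') :
    ⟪u, G v'⟫_𝕜 + ⟪u', G v⟫_𝕜 = 0 := by
  have key : a * ⟪u, G v'⟫_𝕜 = -a * ⟪u', G v⟫_𝕜 := by
    calc a * ⟪u, G v'⟫_𝕜 = ⟪u, K v⟫_𝕜 := by rw [hv, inner_smul_right]
      _ = ⟪K u, v⟫_𝕜 := (hK u v).symm
      _ = -a * ⟪u', G v⟫_𝕜 := by rw [hu, inner_smul_left, ha_conj, hG]
  rw [mul_left_cancel₀ ha (key.trans (neg_mul_comm a _)), neg_add_cancel]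

end

theorem flux_conservation_general
    {H : Type*} [NormedAddCommGroup H] [InnerProductSpace ℂ H]
    (G : H →L[ℂ] H) (hG : ∀ f g : H, ⟪G f, g⟫ = ⟪f, G g⟫)
    (h : ℝ) (hh : h ≠ 0)
    (K : ℝ → (H →L[ℂ] H)) (hK : ∀ x : ℝ, ∀ f g : H, ⟪K x f, g⟫ = ⟪f, K x g⟫)
    (ψ₁ ψ₂ ψ₁' ψ₂' : ℝ → H)
    (hψ₁ : ∀ x : ℝ, HasDerivAt ψ₁ (ψ₁' x) x)
    (hψ₂ : ∀ x : ℝ, HasDerivAt ψ₂ (ψ₂' x) x)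
    (heq₁ : ∀ x : ℝ, K x (ψ₁ x) = (-Complex.I * (h : ℂ)) • G (ψ₁' x))
    (heq₂ : ∀ x : ℝ, K x (ψ₂ x) = (-Complex.I * (h : ℂ)) • G (ψ₂' x)) :
    ∀ x y : ℝ, ⟪ψ₁ x, G (ψ₂ x)⟫ = ⟪ψ₁ y, G (ψ₂ y)⟫ := by
  have ha : -Complex.I * (h : ℂ) ≠ 0 := by simp [hh]
  have ha_conj : (starRingEnd ℂ) (-Complex.I * h) = -(-Complex.I * h) := by simp [Complex.conj_I]
  have hderiv : ∀ x, HasDerivAt (fun t => ⟪ψ₁ t, G (ψ₂ t)⟫) 0 x := fun x =>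
    (HasDerivAt.inner_clm_apply G (hψ₁ x) (hψ₂ x)).congr_deriv <|
      inner_add_inner_eq_zero_of_symmetric_eq_smul (G := (G : H →ₗ[ℂ] H))
        (K := (K x : H →ₗ[ℂ] H)) hG (hK x) ha ha_conj (heq₁ x) (heq₂ x)
  exact is_const_of_deriv_eq_zero (fun x => (hderiv x).differentiableAt) fun x => (hderiv x).deriv

/-- Conservation law `(Ψ₁, G Ψ₂) = const` for the Schroedinger-type equation
`K Ψ = −i h G ∂ₓΨ` with selfadjoint `K(x)` and `G`. -/
theorem flux_conservation
    {H : Type*} [NormedAddCommGroup H] [InnerProductSpace ℂ H] [CompleteSpace H]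
    (G : H →L[ℂ] H) (hG : ∀ f g : H, ⟪G f, g⟫ = ⟪f, G g⟫)
    (h : ℝ) (hh : h ≠ 0)
    (K : ℝ → (H →L[ℂ] H)) (hK : ∀ x : ℝ, ∀ f g : H, ⟪K x f, g⟫ = ⟪f, K x g⟫)
    (ψ₁ ψ₂ ψ₁' ψ₂' : ℝ → H)
    (hψ₁ : ∀ x : ℝ, HasDerivAt ψ₁ (ψ₁' x) x)
    (hψ₂ : ∀ x : ℝ, HasDerivAt ψ₂ (ψ₂' x) x)
    (heq₁ : ∀ x : ℝ, K x (ψ₁ x) = (-Complex.I * (h : ℂ)) • G (ψ₁' x))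
    (heq₂ : ∀ x : ℝ, K x (ψ₂ x) = (-Complex.I * (h : ℂ)) • G (ψ₂' x)) :
    ∀ x y : ℝ, ⟪ψ₁ x, G (ψ₂ x)⟫ = ⟪ψ₁ y, G (ψ₂ y)⟫ :=
  flux_conservation_general G hG h hh K hK ψ₁ ψ₂ ψ₁' ψ₂' hψ₁ hψ₂ heq₁ heq₂
end

section
/- Let H be a complex Hilbert space, K a selfadjoint continuous linear operator on H, and G : H ≃L[ℂ] H an invertible continuous linear operator that is selfadjoint. Then the spectrum of the composite operator G⁻¹ ∘ K is invariant under complex conjugation: a complex number β belongs to the spectrum of G⁻¹ ∘ K if and only if its complex conjugate does. -/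
open scoped ComplexInnerProductSpace

/-- The spectrum of `G⁻¹ K`, with `K`, `G` selfadjoint and `G` invertible,
is invariant under complex conjugation. -/
theorem spectrum_conj_invariant
    {H : Type*} [NormedAddCommGroup H] [InnerProductSpace ℂ H] [CompleteSpace H]
    (K : H →L[ℂ] H) (hK : ∀ f g : H, ⟪K f, g⟫ = ⟪f, K g⟫)
    (G : H ≃L[ℂ] H) (hG : ∀ f g : H, ⟪G f, g⟫ = ⟪f, G g⟫)
    (β : ℂ) :
    β ∈ spectrum ℂ ((G.symm : H →L[ℂ] H) ∘L K) ↔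
      (starRingEnd ℂ) β ∈ spectrum ℂ ((G.symm : H →L[ℂ] H) ∘L K) := by
  set A := (G.symm : H →L[ℂ] H) ∘L K with hA
  have hKsa : IsSelfAdjoint K := ContinuousLinearMap.isSelfAdjoint_iff_isSymmetric.mpr hK
  have hGs : IsSelfAdjoint (G.symm : H →L[ℂ] H) := by
    refine ContinuousLinearMap.isSelfAdjoint_iff_isSymmetric.mpr fun f g => ?_
    calc ⟪(G.symm : H →L[ℂ] H) f, g⟫ = ⟪G.symm f, G (G.symm g)⟫ := by simp
      _ = ⟪G (G.symm f), G.symm g⟫ := (hG _ _).symm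
      _ = ⟪f, (G.symm : H →L[ℂ] H) g⟫ := by simp
  have hstar : star A = (G.toUnit : H →L[ℂ] H) * A * ((G.toUnit⁻¹ : (H →L[ℂ] H)ˣ) : H →L[ℂ] H) := by
    rw [ContinuousLinearMap.star_eq_adjoint, hA, ContinuousLinearMap.adjoint_comp,
      ContinuousLinearMap.isSelfAdjoint_iff'.mp hKsa,
      ContinuousLinearMap.isSelfAdjoint_iff'.mp hGs]
    ext x
    simp [ContinuousLinearEquiv.toUnit, ContinuousLinearMap.mul_apply]
  have key : spectrum ℂ A = star (spectrum ℂ A) := by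
    rw [← spectrum.map_star, hstar, spectrum.units_conjugate]
  constructor <;> intro h
  · rw [key]
    simpa [Set.mem_star] using h
  · rw [key] at h
    simpa [Set.mem_star] using h
end

section
/- Let H be a complex Hilbert space, G : H ≃L[ℂ] H an invertible selfadjoint continuous linear operator, and P : H →L[ℂ] H a continuous linear projection (P ∘ P = P) whose adjoint satisfies P† = G ∘ P ∘ G⁻¹. If φ ∈ H is nonzero, P φ = φ, and the range of P equals the one-dimensional complex span of φ, then the G-normalization factor ⟪φ, G φ⟫ is nonzero. -/
open scoped ComplexInnerProductSpace

theorem ContinuousLinearMap.eq_zero_of_adjoint_apply_eq_self_of_mem_orthogonal_range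
    {𝕜 E : Type*} [RCLike 𝕜] [NormedAddCommGroup E] [InnerProductSpace 𝕜 E] [CompleteSpace E]
    {T : E →L[𝕜] E} {ψ : E} (hfix : T.adjoint ψ = ψ)
    (horth : ψ ∈ (LinearMap.range (T : E →ₗ[𝕜] E))ᗮ) : ψ = 0 := by
  rwa [T.orthogonal_range, LinearMap.mem_ker, ContinuousLinearMap.coe_coe, hfix] at horth

theorem normalization_ne_zero_simple_general
    {H : Type*} [NormedAddCommGroup H] [InnerProductSpace ℂ H] [CompleteSpace H]
    (G : H ≃L[ℂ] H)
    (P : H →L[ℂ] H)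
    (hadj : ContinuousLinearMap.adjoint P = (G : H →L[ℂ] H) ∘L P ∘L (G.symm : H →L[ℂ] H))
    (φ : H) (hφ : φ ≠ 0) (hPφ : P φ = φ)
    (hrange : LinearMap.range (P : H →ₗ[ℂ] H) = Submodule.span ℂ {φ}) :
    ⟪φ, G φ⟫ ≠ 0 := by
  intro hN
  have hfix : P.adjoint (G φ) = G φ := by simp [hadj, hPφ]
  have horth : G φ ∈ (LinearMap.range (P : H →ₗ[ℂ] H))ᗮ := by
    rwa [hrange, Submodule.mem_orthogonal_singleton_iff_inner_right]
  exact hφ <| G.map_eq_zero_iff.mp <|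
    P.eq_zero_of_adjoint_apply_eq_self_of_mem_orthogonal_range hfix horth

/-- Non-vanishing of the normalization factor `N = (φ, G φ)` for a simple
eigenvalue: `P` is the associated one-dimensional Riesz projection. -/
theorem normalization_ne_zero_simple
    {H : Type*} [NormedAddCommGroup H] [InnerProductSpace ℂ H] [CompleteSpace H]
    (G : H ≃L[ℂ] H) (hG : ∀ f g : H, ⟪G f, g⟫ = ⟪f, G g⟫)
    (P : H →L[ℂ] H) (hP : P ∘L P = P)
    (hadj : ContinuousLinearMap.adjoint P = (G : H →L[ℂ] H) ∘L P ∘L (G.symm : H →L[ℂ] H))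
    (φ : H) (hφ : φ ≠ 0) (hPφ : P φ = φ)
    (hrange : LinearMap.range (P : H →ₗ[ℂ] H) = Submodule.span ℂ {φ}) :
    ⟪φ, G φ⟫ ≠ 0 :=
  normalization_ne_zero_simple_general G P hadj φ hφ hPφ hrange
end

section
/- Let H be a complex Hilbert space, G : H ≃L[ℂ] H an invertible selfadjoint continuous linear operator, and P : H →L[ℂ] H a continuous linear projection (P ∘ P = P) whose adjoint satisfies P† = G ∘ P ∘ G⁻¹. Suppose φ₁, φ₂ ∈ H are linearly independent, P φ₁ = φ₁, P φ₂ = φ₂, the range of P equals the complex span of {φ₁, φ₂}, and ⟪φ₂, G φ₁⟫ = 0. Then ⟪φ₁, G φ₁⟫ ≠ 0. -/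
open scoped ComplexInnerProductSpace

/-!
If `⟪φ₁, G φ₁⟫ = 0`, then `G φ₁` is orthogonal to `φ₁` and `φ₂`, hence to the range of `P`.
On the other hand `P† (G φ₁) = G P G⁻¹ (G φ₁) = G φ₁`, so `G φ₁` lies in the range of `P†`, which meets
`(range P)ᗮ = ker P†` only in `0`. Thus `G φ₁ = 0`, contradicting `φ₁ ≠ 0`.
-/

namespace Submodule

variable {𝕜 E : Type*} [RCLike 𝕜] [NormedAddCommGroup E] [InnerProductSpace 𝕜 E]

open scoped InnerProductSpace

theorem mem_orthogonal_span_pair_iff {u v w : E} :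
    w ∈ (span 𝕜 {u, v})ᗮ ↔ ⟪u, w⟫_𝕜 = 0 ∧ ⟪v, w⟫_𝕜 = 0 := by
  rw [span_insert, ← inf_orthogonal, mem_inf, mem_orthogonal_singleton_iff_inner_right,
    mem_orthogonal_singleton_iff_inner_right]

end Submodule

namespace ContinuousLinearMap

variable {𝕜 E : Type*} [RCLike 𝕜] [NormedAddCommGroup E] [InnerProductSpace 𝕜 E] [CompleteSpace E]

theorem eq_zero_of_adjoint_apply_eq_self_of_mem_orthogonal_range_s5 {T : E →L[𝕜] E} {x : E}
    (hx : adjoint T x = x) (hxT : x ∈ T.rangeᗮ) : x = 0 := by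
  rw [orthogonal_range] at hxT
  exact hx ▸ hxT

end ContinuousLinearMap

theorem normalization_ne_zero_degenerate_general
    {H : Type*} [NormedAddCommGroup H] [InnerProductSpace ℂ H] [CompleteSpace H]
    (G : H ≃L[ℂ] H)
    (P : H →L[ℂ] H)
    (hadj : ContinuousLinearMap.adjoint P = (G : H →L[ℂ] H) ∘L P ∘L (G.symm : H →L[ℂ] H))
    (φ₁ φ₂ : H) (hind : LinearIndependent ℂ ![φ₁, φ₂])
    (hPφ₁ : P φ₁ = φ₁)
    (hrange : LinearMap.range (P : H →ₗ[ℂ] H) = Submodule.span ℂ {φ₁, φ₂})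
    (hort : ⟪φ₂, G φ₁⟫ = 0) :
    ⟪φ₁, G φ₁⟫ ≠ 0 := by
  intro hN
  have hfix : ContinuousLinearMap.adjoint P (G φ₁) = G φ₁ := by simp [hadj, hPφ₁]
  have horth : G φ₁ ∈ (LinearMap.range (P : H →ₗ[ℂ] H))ᗮ := by
    rw [hrange, Submodule.mem_orthogonal_span_pair_iff]
    exact ⟨hN, hort⟩
  have hGφ₁ : G φ₁ = 0 :=
    ContinuousLinearMap.eq_zero_of_adjoint_apply_eq_self_of_mem_orthogonal_range_s5 hfix horth
  exact hind.ne_zero 0 (by simpa using hGφ₁)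

/-- Non-vanishing of the normalization factor `N₁ = (φ₁, G φ₁)` for a twofold
degenerate eigenvalue with two linearly independent eigenfunctions spanning the
range of the Riesz projection `P`. -/
theorem normalization_ne_zero_degenerate
    {H : Type*} [NormedAddCommGroup H] [InnerProductSpace ℂ H] [CompleteSpace H]
    (G : H ≃L[ℂ] H) (hG : ∀ f g : H, ⟪G f, g⟫ = ⟪f, G g⟫)
    (P : H →L[ℂ] H) (hP : P ∘L P = P)
    (hadj : ContinuousLinearMap.adjoint P = (G : H →L[ℂ] H) ∘L P ∘L (G.symm : H →L[ℂ] H))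
    (φ₁ φ₂ : H) (hind : LinearIndependent ℂ ![φ₁, φ₂])
    (hPφ₁ : P φ₁ = φ₁) (hPφ₂ : P φ₂ = φ₂)
    (hrange : LinearMap.range (P : H →ₗ[ℂ] H) = Submodule.span ℂ {φ₁, φ₂})
    (hort : ⟪φ₂, G φ₁⟫ = 0) :
    ⟪φ₁, G φ₁⟫ ≠ 0 :=
  normalization_ne_zero_degenerate_general G P hadj φ₁ φ₂ hind hPφ₁ hrange hort
end

section
/- Let H be a complex Hilbert space, G a selfadjoint continuous linear operator on H, and K : ℝ → (H →L[ℂ] H) a family of continuous linear operators with K(t) selfadjoint for each t. Suppose that at a point x the family K has derivative K'(x) (in operator norm), that φ : ℝ → H has derivative φ'(x) at x, that β : ℝ → ℝ has derivative β'(x) at x, and that K(t)(φ(t)) = β(t) • G(φ(t)) for all t in a neighborhood of x. Then β'(x) · ⟪φ(x), G(φ(x))⟫ = ⟪φ(x), K'(x)(φ(x))⟫. -/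
open scoped ComplexInnerProductSpace

/-!
Differentiate the eigen-equation `K(t) φ(t) = β(t) G φ(t)` at `x` and pair it with `φ(x)`.
Since `K(x)` and `G` are selfadjoint and `φ(x)` satisfies the eigen-equation at `x`, the term
`⟪φ, K φ'⟫` equals `β ⟪φ, G φ'⟫`, so both terms involving `φ'` cancel.
-/

theorem HasDerivAt.clm_apply_restrictScalars {𝕜 𝕜' : Type*} [NontriviallyNormedField 𝕜]
    [NontriviallyNormedField 𝕜'] [NormedAlgebra 𝕜 𝕜'] {E F : Type*}
    [NormedAddCommGroup E] [NormedSpace 𝕜' E] [NormedSpace 𝕜 E] [IsScalarTower 𝕜 𝕜' E]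
    [NormedAddCommGroup F] [NormedSpace 𝕜' F] [NormedSpace 𝕜 F] [IsScalarTower 𝕜 𝕜' F]
    {c : 𝕜 → E →L[𝕜'] F} {c' : E →L[𝕜'] F} {u : 𝕜 → E} {u' : E} {x : 𝕜}
    (hc : HasDerivAt c c' x) (hu : HasDerivAt u u' x) :
    HasDerivAt (fun y => c y (u y)) (c' (u x) + c x u') x := by
  have hr : HasDerivAt (fun y => (c y).restrictScalars 𝕜) (c'.restrictScalars 𝕜) x :=
    (ContinuousLinearMap.restrictScalarsL 𝕜' E F 𝕜 𝕜).hasFDerivAt.comp_hasDerivAt x hc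
  exact hr.clm_apply hu

theorem LinearMap.IsSymmetric.inner_apply_eq_mul_inner_of_apply_eq_smul
    {𝕜 E : Type*} [RCLike 𝕜] [NormedAddCommGroup E] [InnerProductSpace 𝕜 E]
    {A B : E →ₗ[𝕜] E} (hA : A.IsSymmetric) (hB : B.IsSymmetric) {v : E} {b : ℝ}
    (hv : A v = (b : 𝕜) • B v) (w : E) :
    inner 𝕜 v (A w) = b * inner 𝕜 v (B w) := by
  rw [← hA, hv, inner_smul_left, RCLike.conj_ofReal, hB]

theorem HasDerivAt.pencil_equation {𝕜 E : Type*} [RCLike 𝕜] [NormedAddCommGroup E]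
    [NormedSpace 𝕜 E] [NormedSpace ℝ E] [IsScalarTower ℝ 𝕜 E]
    {K : ℝ → E →L[𝕜] E} {K' G : E →L[𝕜] E} {φ : ℝ → E} {φ' : E} {β : ℝ → ℝ} {β' x : ℝ}
    (hK : HasDerivAt K K' x) (hφ : HasDerivAt φ φ' x) (hβ : HasDerivAt β β' x)
    (heq : ∀ᶠ t in nhds x, K t (φ t) = (β t : 𝕜) • G (φ t)) :
    K' (φ x) + K x φ' = (β' : 𝕜) • G (φ x) + (β x : 𝕜) • G φ' := by
  have hKφ : HasDerivAt (fun t => K t (φ t)) (K' (φ x) + K x φ') x :=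
    hK.clm_apply_restrictScalars hφ
  have hβ𝕜 : HasDerivAt (fun t => (β t : 𝕜)) (β' : 𝕜) x :=
    (RCLike.ofRealCLM (K := 𝕜)).hasFDerivAt.comp_hasDerivAt_of_eq x hβ rfl
  have hβGφ : HasDerivAt (fun t => (β t : 𝕜) • G (φ t))
      ((β x : 𝕜) • G φ' + (β' : 𝕜) • G (φ x)) x :=
    hβ𝕜.fun_smul ((G.restrictScalars ℝ).hasFDerivAt.comp_hasDerivAt x hφ)
  rw [add_comm ((β' : 𝕜) • _)]
  exact (hKφ.congr_of_eventuallyEq (heq.mono fun t ht => ht.symm)).unique hβGφ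

theorem eigenvalue_derivative_formula_general
    {H : Type*} [NormedAddCommGroup H] [InnerProductSpace ℂ H]
    (G : H →L[ℂ] H) (hG : ∀ f g : H, ⟪G f, g⟫ = ⟪f, G g⟫)
    (K : ℝ → (H →L[ℂ] H)) (hKsa : ∀ t : ℝ, ∀ f g : H, ⟪K t f, g⟫ = ⟪f, K t g⟫)
    (x : ℝ) (K' : H →L[ℂ] H) (hK : HasDerivAt K K' x)
    (φ : ℝ → H) (φ'x : H) (hφ : HasDerivAt φ φ'x x)
    (β : ℝ → ℝ) (β'x : ℝ) (hβ : HasDerivAt β β'x x)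
    (heq : ∀ᶠ t in nhds x, K t (φ t) = ((β t : ℂ)) • G (φ t)) :
    (β'x : ℂ) * ⟪φ x, G (φ x)⟫ = ⟪φ x, K' (φ x)⟫ := by
  have hcross : ⟪φ x, K x φ'x⟫ = β x * ⟪φ x, G φ'x⟫ :=
    LinearMap.IsSymmetric.inner_apply_eq_mul_inner_of_apply_eq_smul
      (A := (K x).toLinearMap) (B := G.toLinearMap) (hKsa x) hG heq.self_of_nhds φ'x
  have hpaired := congrArg (inner ℂ (φ x)) (hK.pencil_equation hφ hβ heq)
  simp only [inner_add_right, inner_smul_right, hcross] at hpaired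
  linear_combination -hpaired

/-- Hellmann–Feynman-type formula `dβ/dx · (φ, G φ) = (φ, K' φ)` for a real
eigenvalue branch of the pencil `K(x) φ = β G φ`. -/
theorem eigenvalue_derivative_formula
    {H : Type*} [NormedAddCommGroup H] [InnerProductSpace ℂ H] [CompleteSpace H]
    (G : H →L[ℂ] H) (hG : ∀ f g : H, ⟪G f, g⟫ = ⟪f, G g⟫)
    (K : ℝ → (H →L[ℂ] H)) (hKsa : ∀ t : ℝ, ∀ f g : H, ⟪K t f, g⟫ = ⟪f, K t g⟫)
    (x : ℝ) (K' : H →L[ℂ] H) (hK : HasDerivAt K K' x)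
    (φ : ℝ → H) (φ'x : H) (hφ : HasDerivAt φ φ'x x)
    (β : ℝ → ℝ) (β'x : ℝ) (hβ : HasDerivAt β β'x x)
    (heq : ∀ᶠ t in nhds x, K t (φ t) = ((β t : ℂ)) • G (φ t)) :
    (β'x : ℂ) * ⟪φ x, G (φ x)⟫ = ⟪φ x, K' (φ x)⟫ :=
  eigenvalue_derivative_formula_general G hG K hKsa x K' hK φ φ'x hφ β β'x hβ heq
end

section
/- Let H be a complex Hilbert space, G a selfadjoint continuous linear operator on H, and K : ℝ → (H →L[ℂ] H) a family of continuous linear operators with K(t) selfadjoint for each t, having derivative K'(x) (in operator norm) at a point x. Suppose βₙ : ℝ → ℝ and φₙ : ℝ → H are differentiable at x with K(t)(φₙ(t)) = βₙ(t) • G(φₙ(t)) for all t near x, and suppose βⱼ ∈ ℝ, φⱼ ∈ H satisfy K(x) φⱼ = βⱼ • (G φⱼ) with βⱼ ≠ βₙ(x). Then (βₙ(x) − βⱼ) · ⟪φⱼ, G(φₙ'(x))⟫ = ⟪φⱼ, K'(x)(φₙ(x))⟫. -/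
open scoped InnerProductSpace ComplexInnerProductSpace

/-!
Differentiate the branch equation `K t (φₙ t) = βₙ t • G (φₙ t)` at `x` and pair the result with
`φⱼ`. Since `K x` and `G` are symmetric and `βⱼ` is real, `φⱼ` can be moved across them:
`⟪φⱼ, K x v⟫ = βⱼ ⟪φⱼ, G v⟫` for every `v`. This turns `⟪φⱼ, K x φₙ'⟫` into `βⱼ ⟪φⱼ, G φₙ'⟫`, and,
applied to `v = φₙ x`, shows that `φⱼ` and `φₙ x` are `G`-orthogonal because `βⱼ ≠ βₙ x`, which
kills the term carrying `βₙ'`.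
-/

section Pencil

variable {𝕜 E : Type*} [RCLike 𝕜] [NormedAddCommGroup E] [InnerProductSpace 𝕜 E]
  {K G : E →L[𝕜] E} {β : ℝ} {φ : E}

theorem inner_apply_eq_mul_inner_of_apply_eq_smul (hK : (K : E →ₗ[𝕜] E).IsSymmetric)
    (hG : (G : E →ₗ[𝕜] E).IsSymmetric) (hφ : K φ = (β : 𝕜) • G φ) (v : E) :
    ⟪φ, K v⟫_𝕜 = β * ⟪φ, G v⟫_𝕜 := by
  rw [← hK.apply_clm, hφ, inner_smul_left, RCLike.conj_ofReal, hG.apply_clm]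

theorem inner_apply_eq_zero_of_apply_eq_smul_of_ne (hK : (K : E →ₗ[𝕜] E).IsSymmetric)
    (hG : (G : E →ₗ[𝕜] E).IsSymmetric) (hφ : K φ = (β : 𝕜) • G φ) {β' : ℝ} {ψ : E}
    (hψ : K ψ = (β' : 𝕜) • G ψ) (hne : β ≠ β') :
    ⟪φ, G ψ⟫_𝕜 = 0 := by
  have key : ((β' : 𝕜) - β) * ⟪φ, G ψ⟫_𝕜 = 0 := by
    rw [sub_mul, ← inner_smul_right, ← hψ, inner_apply_eq_mul_inner_of_apply_eq_smul hK hG hφ,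
      sub_self]
  refine (mul_eq_zero.mp key).resolve_left ?_
  exact sub_ne_zero.mpr (RCLike.ofReal_injective.ne hne.symm)

end Pencil

theorem HasDerivAt.clm_apply_deriv_eq_of_eventually_eq_smul {E F : Type*} [NormedAddCommGroup E]
    [NormedSpace ℂ E] [NormedAddCommGroup F] [NormedSpace ℂ F] {K : ℝ → E →L[ℂ] F} {K' : E →L[ℂ] F}
    {G : E →L[ℂ] F} {β : ℝ → ℝ} {β' : ℝ} {φ : ℝ → E} {φ' : E} {x : ℝ}
    (hK : HasDerivAt K K' x) (hβ : HasDerivAt β β' x) (hφ : HasDerivAt φ φ' x)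
    (heq : ∀ᶠ t in nhds x, K t (φ t) = (β t : ℂ) • G (φ t)) :
    K' (φ x) + K x φ' = (β' : ℂ) • G (φ x) + (β x : ℂ) • G φ' := by
  have hKr : HasDerivAt (fun t ↦ (K t).restrictScalars ℝ) (K'.restrictScalars ℝ) x :=
    (ContinuousLinearMap.restrictScalarsL ℂ E F ℝ ℝ).hasFDerivAt.comp_hasDerivAt x hK
  have hGφ : HasDerivAt (fun t ↦ G (φ t)) (G φ') x :=
    (G.restrictScalars ℝ).hasFDerivAt.comp_hasDerivAt x hφ
  have hlhs : HasDerivAt (fun t ↦ K t (φ t)) (K' (φ x) + K x φ') x := hKr.clm_apply hφ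
  have hrhs := hβ.ofReal_comp.smul hGφ
  rw [add_comm] at hrhs
  exact (hlhs.congr_of_eventuallyEq (heq.mono fun _ ht ↦ ht.symm)).unique hrhs

theorem conversion_coefficient_formula_general
    {H : Type*} [NormedAddCommGroup H] [InnerProductSpace ℂ H]
    (G : H →L[ℂ] H) (hG : ∀ f g : H, ⟪G f, g⟫ = ⟪f, G g⟫)
    (K : ℝ → (H →L[ℂ] H)) (hKsa : ∀ t : ℝ, ∀ f g : H, ⟪K t f, g⟫ = ⟪f, K t g⟫)
    (x : ℝ) (K' : H →L[ℂ] H) (hK : HasDerivAt K K' x)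
    (βn : ℝ → ℝ) (βn'x : ℝ) (hβn : HasDerivAt βn βn'x x)
    (φn : ℝ → H) (φn'x : H) (hφn : HasDerivAt φn φn'x x)
    (heqn : ∀ᶠ t in nhds x, K t (φn t) = ((βn t : ℂ)) • G (φn t))
    (βj : ℝ) (φj : H) (heqj : K x φj = ((βj : ℂ)) • (G φj))
    (hne : βj ≠ βn x) :
    ((βn x : ℂ) - (βj : ℂ)) * ⟪φj, G φn'x⟫ = ⟪φj, K' (φn x)⟫ := by
  have hderiv := congrArg (⟪φj, ·⟫) (hK.clm_apply_deriv_eq_of_eventually_eq_smul hβn hφn heqn)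
  simp only [inner_add_right, inner_smul_right] at hderiv
  rw [inner_apply_eq_mul_inner_of_apply_eq_smul (hKsa x) hG heqj,
    inner_apply_eq_zero_of_apply_eq_smul_of_ne (hKsa x) hG heqj heqn.self_of_nhds hne] at hderiv
  linear_combination -hderiv

/-- The identity `(βₙ − βⱼ)·(φⱼ, G φₙ') = (φⱼ, K' φₙ)` relating the conversion
coefficient to the matrix element of `K'` for distinct real eigenvalue branches
of the pencil `K(x) φ = β G φ`. -/
theorem conversion_coefficient_formula
    {H : Type*} [NormedAddCommGroup H] [InnerProductSpace ℂ H] [CompleteSpace H]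
    (G : H →L[ℂ] H) (hG : ∀ f g : H, ⟪G f, g⟫ = ⟪f, G g⟫)
    (K : ℝ → (H →L[ℂ] H)) (hKsa : ∀ t : ℝ, ∀ f g : H, ⟪K t f, g⟫ = ⟪f, K t g⟫)
    (x : ℝ) (K' : H →L[ℂ] H) (hK : HasDerivAt K K' x)
    (βn : ℝ → ℝ) (βn'x : ℝ) (hβn : HasDerivAt βn βn'x x)
    (φn : ℝ → H) (φn'x : H) (hφn : HasDerivAt φn φn'x x)
    (heqn : ∀ᶠ t in nhds x, K t (φn t) = ((βn t : ℂ)) • G (φn t))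
    (βj : ℝ) (φj : H) (heqj : K x φj = ((βj : ℂ)) • (G φj))
    (hne : βj ≠ βn x) :
    ((βn x : ℂ) - (βj : ℂ)) * ⟪φj, G φn'x⟫ = ⟪φj, K' (φn x)⟫ :=
  conversion_coefficient_formula_general G hG K hKsa x K' hK βn βn'x hβn φn φn'x hφn heqn βj φj heqj
    hne
end

section
/- Let H be a complex Hilbert space, G a selfadjoint continuous linear operator on H, and K : ℝ → (H →L[ℂ] H) a family of continuous linear operators with K(t) selfadjoint for each t, having derivative K'(κ) (in operator norm) at a point κ. Suppose β₁, β₂ : ℝ → ℝ and φ₁, φ₂ : ℝ → H are continuous on a neighborhood of κ, satisfy K(t)(φⱼ(t)) = βⱼ(t) • G(φⱼ(t)) for all t in that neighborhood, β₁(t) ≠ β₂(t) for all t ≠ κ in the neighborhood, β₁(κ) = β₂(κ), and β₂ and φ₂ are differentiable at κ. Then ⟪φ₁(κ), K'(κ)(φ₂(κ))⟫ = 0. -/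
open scoped ComplexInnerProductSpace
open Filter Topology

/-!
By selfadjointness of `K t` and `G`, `(β₁ t - β₂ t) ⟪φ₁ t, G (φ₂ t)⟫ = 0`, so the `G`-matrix
element vanishes off `κ` and hence, by continuity, at `κ`. Differentiating the eigen-equation of
`φ₂` at `κ` and pairing it with `φ₁ κ`, an eigenvector for the same eigenvalue `β₂ κ`, gives the
Hellmann–Feynman relation `⟪φ₁ κ, K' (φ₂ κ)⟫ = β₂' κ ⟪φ₁ κ, G (φ₂ κ)⟫ = 0`.
-/

section Pencil

variable {𝕜 E : Type*} [RCLike 𝕜] [NormedAddCommGroup E] [InnerProductSpace 𝕜 E]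
  {A G : E →ₗ[𝕜] E}

theorem inner_apply_eq_of_pencil_eigen (hA : A.IsSymmetric) (hG : G.IsSymmetric) {x : E}
    {a : ℝ} (hx : A x = (a : 𝕜) • G x) (y : E) : inner 𝕜 x (A y) = a * inner 𝕜 x (G y) := by
  rw [← hA, hx, inner_smul_left, RCLike.conj_ofReal, hG]

theorem inner_eq_zero_of_pencil_eigen_of_ne (hA : A.IsSymmetric) (hG : G.IsSymmetric)
    {x y : E} {a b : ℝ} (hx : A x = (a : 𝕜) • G x) (hy : A y = (b : 𝕜) • G y)
    (hab : a ≠ b) :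
    inner 𝕜 x (G y) = 0 := by
  have h : (a : 𝕜) * inner 𝕜 x (G y) = b * inner 𝕜 x (G y) := by
    rw [← inner_apply_eq_of_pencil_eigen hA hG hx, hy, inner_smul_right]
  exact (mul_eq_mul_right_iff.1 h).resolve_left (by exact_mod_cast hab)

end Pencil

theorem HasDerivAt.clm_apply_of_real {𝕜 E F : Type*} [NontriviallyNormedField 𝕜]
    [NormedAlgebra ℝ 𝕜] [NormedAddCommGroup E] [NormedSpace 𝕜 E] [NormedSpace ℝ E]
    [IsScalarTower ℝ 𝕜 E] [NormedAddCommGroup F] [NormedSpace 𝕜 F] [NormedSpace ℝ F]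
    [IsScalarTower ℝ 𝕜 F] {c : ℝ → E →L[𝕜] F} {c' : E →L[𝕜] F} {u : ℝ → E} {u' : E}
    {x : ℝ} (hc : HasDerivAt c c' x) (hu : HasDerivAt u u' x) :
    HasDerivAt (fun t => c t (u t)) (c' (u x) + c x u') x :=
  ((ContinuousLinearMap.restrictScalarsL 𝕜 E F ℝ ℝ).hasFDerivAt.comp_hasDerivAt x hc).clm_apply hu

theorem pencil_eigen_equation_deriv {𝕜 E : Type*} [RCLike 𝕜] [NormedAddCommGroup E]
    [NormedSpace 𝕜 E] [NormedSpace ℝ E] [IsScalarTower ℝ 𝕜 E] {K : ℝ → E →L[𝕜] E}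
    {K' G : E →L[𝕜] E} {b : ℝ → ℝ} {b' : ℝ} {y : ℝ → E} {y' : E} {x : ℝ}
    (hK : HasDerivAt K K' x) (hy : HasDerivAt y y' x) (hb : HasDerivAt b b' x)
    (heq : ∀ᶠ t in 𝓝 x, K t (y t) = (b t : 𝕜) • G (y t)) :
    K' (y x) + K x y' = (b' : 𝕜) • G (y x) + (b x : 𝕜) • G y' := by
  have hGy : HasDerivAt (fun t => G (y t)) (G y') x := by
    simpa using (hasDerivAt_const x G).clm_apply_of_real hy
  have hbGy : HasDerivAt (fun t => (b t : 𝕜) • G (y t))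
      ((b x : 𝕜) • G y' + (b' : 𝕜) • G (y x)) x := by
    simp only [← RCLike.real_smul_eq_coe_smul]
    exact hb.smul hGy
  exact ((hK.clm_apply_of_real hy).unique (hbGy.congr_of_eventuallyEq heq)).trans (add_comm _ _)

/-- Taking `u = y x` recovers the Hellmann–Feynman formula `b' ⟪y, G y⟫ = ⟪y, K' y⟫`. -/
theorem hellmann_feynman_pencil {𝕜 E : Type*} [RCLike 𝕜] [NormedAddCommGroup E]
    [InnerProductSpace 𝕜 E] [NormedSpace ℝ E] [IsScalarTower ℝ 𝕜 E] {K : ℝ → E →L[𝕜] E}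
    {K' G : E →L[𝕜] E} {b : ℝ → ℝ} {b' : ℝ} {y : ℝ → E} {y' : E} {x : ℝ}
    (hK : HasDerivAt K K' x) (hy : HasDerivAt y y' x) (hb : HasDerivAt b b' x)
    (heq : ∀ᶠ t in 𝓝 x, K t (y t) = (b t : 𝕜) • G (y t))
    (hKx : (K x : E →ₗ[𝕜] E).IsSymmetric) (hG : (G : E →ₗ[𝕜] E).IsSymmetric) {u : E}
    (hu : K x u = (b x : 𝕜) • G u) :
    inner 𝕜 u (K' (y x)) = b' * inner 𝕜 u (G (y x)) := by
  have hKy' : inner 𝕜 u (K x y') = b x * inner 𝕜 u (G y') :=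
    inner_apply_eq_of_pencil_eigen hKx hG hu y'
  have h := congrArg (inner 𝕜 u) (pencil_eigen_equation_deriv hK hy hb heq)
  simp only [inner_add_right, inner_smul_right, hKy'] at h
  exact add_right_cancel h

theorem offdiagonal_matrix_element_vanishes_at_crossing_general
    {H : Type*} [NormedAddCommGroup H] [InnerProductSpace ℂ H]
    (G : H →L[ℂ] H) (hG : ∀ f g : H, ⟪G f, g⟫ = ⟪f, G g⟫)
    (K : ℝ → (H →L[ℂ] H)) (hKsa : ∀ t : ℝ, ∀ f g : H, ⟪K t f, g⟫ = ⟪f, K t g⟫)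
    (κ : ℝ) (K' : H →L[ℂ] H) (hK : HasDerivAt K K' κ)
    (β₁ β₂ : ℝ → ℝ) (φ₁ φ₂ : ℝ → H)
    (s : Set ℝ) (hs : s ∈ nhds κ)
    (hcφ₁ : ContinuousOn φ₁ s) (hcφ₂ : ContinuousOn φ₂ s)
    (heq₁ : ∀ t ∈ s, K t (φ₁ t) = ((β₁ t : ℂ)) • G (φ₁ t))
    (heq₂ : ∀ t ∈ s, K t (φ₂ t) = ((β₂ t : ℂ)) • G (φ₂ t))
    (hne : ∀ t ∈ s, t ≠ κ → β₁ t ≠ β₂ t)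
    (hcross : β₁ κ = β₂ κ)
    (hβ₂ : DifferentiableAt ℝ β₂ κ) (hφ₂ : DifferentiableAt ℝ φ₂ κ) :
    ⟪φ₁ κ, K' (φ₂ κ)⟫ = 0 := by
  have hκs : κ ∈ s := mem_of_mem_nhds hs
  have hG₀ : ⟪φ₁ κ, G (φ₂ κ)⟫ = 0 := by
    have hcont : ContinuousAt (fun t => ⟪φ₁ t, G (φ₂ t)⟫) κ :=
      (hcφ₁.continuousAt hs).inner (G.continuous.continuousAt.comp (hcφ₂.continuousAt hs))
    refine ((hcont.eventuallyEq_nhds_iff_eventuallyEq_nhdsNE continuousAt_const).1 ?_).eq_of_nhds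
    filter_upwards [eventually_nhdsWithin_of_eventually_nhds hs, self_mem_nhdsWithin]
      with t hts htκ
    exact inner_eq_zero_of_pencil_eigen_of_ne (hKsa t) hG (heq₁ t hts) (heq₂ t hts)
      (hne t hts htκ)
  rw [hellmann_feynman_pencil hK hφ₂.hasDerivAt hβ₂.hasDerivAt (eventually_of_mem hs heq₂)
    (hKsa κ) hG (hcross ▸ heq₁ κ hκs), hG₀, mul_zero]

/-- Vanishing of the off-diagonal matrix element `(φ₁(κ), K'(κ) φ₂(κ))` at a
crossing point `κ` of two real eigenvalue branches of the pencil
`K(x) φ = β G φ`. -/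
theorem offdiagonal_matrix_element_vanishes_at_crossing
    {H : Type*} [NormedAddCommGroup H] [InnerProductSpace ℂ H] [CompleteSpace H]
    (G : H →L[ℂ] H) (hG : ∀ f g : H, ⟪G f, g⟫ = ⟪f, G g⟫)
    (K : ℝ → (H →L[ℂ] H)) (hKsa : ∀ t : ℝ, ∀ f g : H, ⟪K t f, g⟫ = ⟪f, K t g⟫)
    (κ : ℝ) (K' : H →L[ℂ] H) (hK : HasDerivAt K K' κ)
    (β₁ β₂ : ℝ → ℝ) (φ₁ φ₂ : ℝ → H)
    (s : Set ℝ) (hs : s ∈ nhds κ)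
    (hcβ₁ : ContinuousOn β₁ s) (hcβ₂ : ContinuousOn β₂ s)
    (hcφ₁ : ContinuousOn φ₁ s) (hcφ₂ : ContinuousOn φ₂ s)
    (heq₁ : ∀ t ∈ s, K t (φ₁ t) = ((β₁ t : ℂ)) • G (φ₁ t))
    (heq₂ : ∀ t ∈ s, K t (φ₂ t) = ((β₂ t : ℂ)) • G (φ₂ t))
    (hne : ∀ t ∈ s, t ≠ κ → β₁ t ≠ β₂ t)
    (hcross : β₁ κ = β₂ κ)
    (hβ₂ : DifferentiableAt ℝ β₂ κ) (hφ₂ : DifferentiableAt ℝ φ₂ κ) :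
    ⟪φ₁ κ, K' (φ₂ κ)⟫ = 0 :=
  offdiagonal_matrix_element_vanishes_at_crossing_general G hG K hKsa κ K' hK β₁ β₂ φ₁ φ₂ s hs hcφ₁
    hcφ₂ heq₁ heq₂ hne hcross hβ₂ hφ₂
end

section
/- Let T be a 2×2 complex matrix with entries t₁₁, t₁₂, t₂₁, t₂₂, and let N₁, N₂ be nonzero real numbers. Suppose N₁ = |t₁₁|² N₁ + |t₂₁|² N₂, N₂ = |t₁₂|² N₁ + |t₂₂|² N₂, 0 = conj(t₁₁) t₁₂ N₁ + conj(t₂₁) t₂₂ N₂, t₂₂ ≠ 0, and det T = 1. Then t₂₂ = conj(t₁₁) and t₂₁ = −(N₁/N₂) · conj(t₁₂); moreover, if in addition N₁ = N₂, then T is unitary (T · Tᴴ = 1, where Tᴴ is the conjugate transpose). -/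
/-!
With `G = diag(N₁, N₂)`, the flux relations say that the second row of `Tᴴ G`, namely
`(conj t₁₂ N₁, conj t₂₂ N₂)`, is mapped by `T` to `(0, N₂)`. Since `det T = 1`, the inverse of `T`
is its adjugate `!![t₂₂, -t₁₂; -t₂₁, t₁₁]`, so that row equals `(-N₂ t₂₁, N₂ t₁₁)`; dividing by `N₂`
gives the canonical form. For `N₁ = N₂` this form is `!![a, b; -conj b, conj a]`, whose determinant
`|a|² + |b|²` is also the diagonal entry of `T Tᴴ`.
-/

open Matrix ComplexConjugate

theorem Matrix.eq_vecMul_adjugate_of_vecMul_eq {n R : Type*} [Fintype n] [DecidableEq n]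
    [CommRing R] {T : Matrix n n R} (hT : T.det = 1) {v w : n → R} (h : v ᵥ* T = w) :
    v = w ᵥ* T.adjugate := by
  rw [← h, vecMul_vecMul, mul_adjugate, hT, one_smul, vecMul_one]

section FluxConservation

variable {R : Type*} [CommRing R] [StarRing R]

theorem star_mul_eq_of_flux_conservation {a b c d N₁ N₂ : R}
    (hN₁ : IsSelfAdjoint N₁) (hN₂ : IsSelfAdjoint N₂)
    (h2 : star b * b * N₁ + star d * d * N₂ = N₂) (h3 : star a * b * N₁ + star c * d * N₂ = 0)
    (hdet : !![a, b; c, d].det = 1) :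
    star b * N₁ = -(N₂ * c) ∧ star d * N₂ = N₂ * a := by
  have h3' : star b * a * N₁ + star d * c * N₂ = 0 := by
    simpa [hN₁.star_eq, hN₂.star_eq, mul_comm] using congrArg star h3
  have hrow : ![star b * N₁, star d * N₂] ᵥ* !![a, b; c, d] = ![0, N₂] := by
    ext i
    fin_cases i <;> simp only [vecMul, vec2_dotProduct, of_apply, cons_val', cons_val_zero,
      cons_val_one, cons_val_fin_one, Fin.isValue, Fin.zero_eta, Fin.mk_one]
    · linear_combination h3'
    · linear_combination h2
  simpa [adjugate_fin_two_of] using eq_vecMul_adjugate_of_vecMul_eq hdet hrow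

theorem Matrix.mul_conjTranspose_eq_one_of_det_eq_one_fin_two {a b : R}
    (hdet : !![a, b; -star b, star a].det = 1) :
    !![a, b; -star b, star a] * (!![a, b; -star b, star a])ᴴ = 1 := by
  rw [det_fin_two_of] at hdet
  rw [one_fin_two]
  ext i j
  fin_cases i <;> fin_cases j <;>
    simp only [mul_apply, Fin.sum_univ_two, conjTranspose_apply, of_apply, cons_val', cons_val_zero,
      cons_val_one, cons_val_fin_one, star_neg, star_star, Fin.isValue, Fin.zero_eta, Fin.mk_one]
  · linear_combination hdet
  · ring
  · ring
  · linear_combination hdet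

end FluxConservation

theorem transition_matrix_canonical_form_general
    (t₁₁ t₁₂ t₂₁ t₂₂ : ℂ) (N₁ N₂ : ℝ) (hN₂ : N₂ ≠ 0)
    (h2 : N₂ = ‖t₁₂‖ ^ 2 * N₁ + ‖t₂₂‖ ^ 2 * N₂)
    (h3 : 0 = (starRingEnd ℂ) t₁₁ * t₁₂ * (N₁ : ℂ) + (starRingEnd ℂ) t₂₁ * t₂₂ * (N₂ : ℂ))
    (hdet : Matrix.det !![t₁₁, t₁₂; t₂₁, t₂₂] = 1) :
    t₂₂ = (starRingEnd ℂ) t₁₁ ∧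
    t₂₁ = -((N₁ : ℂ) / (N₂ : ℂ)) * (starRingEnd ℂ) t₁₂ ∧
    (N₁ = N₂ →
      !![t₁₁, t₁₂; t₂₁, t₂₂] * (!![t₁₁, t₁₂; t₂₁, t₂₂]).conjTranspose = 1) := by
  have h2' : conj t₁₂ * t₁₂ * N₁ + conj t₂₂ * t₂₂ * N₂ = N₂ := by
    simp only [Complex.conj_mul']
    exact_mod_cast h2.symm
  obtain ⟨h21, h22⟩ := star_mul_eq_of_flux_conservation (Complex.conj_ofReal N₁)
    (Complex.conj_ofReal N₂) h2' h3.symm hdet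
  rw [← starRingEnd_apply] at h21 h22
  have hN₂' : (N₂ : ℂ) ≠ 0 := Complex.ofReal_ne_zero.mpr hN₂
  have ht₂₂ : t₂₂ = conj t₁₁ := by
    rw [← Complex.conj_conj t₂₂, mul_left_cancel₀ hN₂' ((mul_comm _ _).trans h22)]
  have ht₂₁ : t₂₁ = -((N₁ : ℂ) / N₂) * conj t₁₂ := by
    field_simp
    linear_combination h21
  refine ⟨ht₂₂, ht₂₁, fun hN => ?_⟩
  rw [ht₂₂, ht₂₁, hN, div_self hN₂', neg_one_mul] at hdet ⊢
  exact mul_conjTranspose_eq_one_of_det_eq_one_fin_two hdet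

/-- Canonical form of the transition matrix: with `det T = 1` the flux
conservation relations force `t₂₂ = conj t₁₁`, `t₂₁ = −(N₁/N₂) conj t₁₂`, and
for `N₁ = N₂` the matrix is unitary. -/
theorem transition_matrix_canonical_form
    (t₁₁ t₁₂ t₂₁ t₂₂ : ℂ) (N₁ N₂ : ℝ) (hN₁ : N₁ ≠ 0) (hN₂ : N₂ ≠ 0)
    (h1 : N₁ = ‖t₁₁‖ ^ 2 * N₁ + ‖t₂₁‖ ^ 2 * N₂)
    (h2 : N₂ = ‖t₁₂‖ ^ 2 * N₁ + ‖t₂₂‖ ^ 2 * N₂)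
    (h3 : 0 = (starRingEnd ℂ) t₁₁ * t₁₂ * (N₁ : ℂ) + (starRingEnd ℂ) t₂₁ * t₂₂ * (N₂ : ℂ))
    (ht : t₂₂ ≠ 0)
    (hdet : Matrix.det !![t₁₁, t₁₂; t₂₁, t₂₂] = 1) :
    t₂₂ = (starRingEnd ℂ) t₁₁ ∧
    t₂₁ = -((N₁ : ℂ) / (N₂ : ℂ)) * (starRingEnd ℂ) t₁₂ ∧
    (N₁ = N₂ →
      !![t₁₁, t₁₂; t₂₁, t₂₂] * (!![t₁₁, t₁₂; t₂₁, t₂₂]).conjTranspose = 1) :=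
  transition_matrix_canonical_form_general t₁₁ t₁₂ t₂₁ t₂₂ N₁ N₂ hN₂ h2 h3 hdet
end

section
/- Let y be a nonzero real number and set ν := i y ∈ ℂ. Define the 2×2 complex matrix T with entries t₁₁ = t₂₂ = exp(i π ν), t₁₂ = i · (2πν)^(1/2) · exp(i π ν/2 + ν − ν · log|y|) / Γ(1 − ν), and t₂₁ = (2πν)^(1/2) · exp(i π ν/2 − ν + ν · log|y|) / Γ(1 + ν), where (·)^(1/2) is the principal complex power, log the real logarithm, and Γ the complex Gamma function. Then det T = 1. -/
/-- The canonical transition matrix with purely imaginary Landau–Zener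
parameter `ν = i y` has determinant one. -/
theorem canonical_transition_matrix_det_one
    (y : ℝ) (hy : y ≠ 0) (ν : ℂ) (hν : ν = Complex.I * (y : ℂ))
    (t₁₁ t₁₂ t₂₁ t₂₂ : ℂ)
    (h11 : t₁₁ = Complex.exp (Complex.I * (Real.pi : ℂ) * ν))
    (h22 : t₂₂ = Complex.exp (Complex.I * (Real.pi : ℂ) * ν))
    (h12 : t₁₂ = Complex.I * ((2 * (Real.pi : ℂ) * ν) ^ ((1 : ℂ) / 2)) *
        Complex.exp (Complex.I * (Real.pi : ℂ) * ν / 2 + ν - ν * (Real.log |y| : ℂ)) /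
          Complex.Gamma (1 - ν))
    (h21 : t₂₁ = ((2 * (Real.pi : ℂ) * ν) ^ ((1 : ℂ) / 2)) *
        Complex.exp (Complex.I * (Real.pi : ℂ) * ν / 2 - ν + ν * (Real.log |y| : ℂ)) /
          Complex.Gamma (1 + ν)) :
    Matrix.det !![t₁₁, t₁₂; t₂₁, t₂₂] = 1 := by
  have hπ : (Real.pi : ℂ) ≠ 0 := by
    exact_mod_cast Real.pi_ne_zero
  have hy' : (y : ℂ) ≠ 0 := by exact_mod_cast hy
  have hν0 : ν ≠ 0 := by rw [hν]; exact mul_ne_zero Complex.I_ne_zero hy'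
  have h2πν : (2 * (Real.pi : ℂ) * ν) ≠ 0 :=
    mul_ne_zero (mul_ne_zero two_ne_zero hπ) hν0
  have hsq : ((2 * (Real.pi : ℂ) * ν) ^ ((1 : ℂ) / 2)) *
      ((2 * (Real.pi : ℂ) * ν) ^ ((1 : ℂ) / 2)) = 2 * (Real.pi : ℂ) * ν := by
    rw [← Complex.cpow_add _ _ h2πν]
    norm_num
  have hsin : Complex.sin ((Real.pi : ℂ) * ν) ≠ 0 := by
    intro h
    rw [Complex.sin_eq_zero_iff] at h
    obtain ⟨k, hk⟩ := h
    rw [mul_comm] at hk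
    have hνk : ν = (k : ℂ) := mul_right_cancel₀ hπ hk
    have : y = 0 := by
      have := congrArg Complex.im hνk
      simpa [hν] using this
    exact hy this
  have hG : Complex.Gamma (1 - ν) * Complex.Gamma (1 + ν) =
      ν * (Real.pi : ℂ) / Complex.sin ((Real.pi : ℂ) * ν) := by
    rw [add_comm, Complex.Gamma_add_one ν hν0, mul_comm (Complex.Gamma (1 - ν)),
      mul_assoc, Complex.Gamma_mul_Gamma_one_sub ν, mul_div_assoc]
  have hGne : Complex.Gamma (1 - ν) * Complex.Gamma (1 + ν) ≠ 0 := by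
    rw [hG]
    exact div_ne_zero (mul_ne_zero hν0 hπ) hsin
  have hG1 : Complex.Gamma (1 - ν) ≠ 0 := fun h => hGne (by rw [h, zero_mul])
  have hG2 : Complex.Gamma (1 + ν) ≠ 0 := fun h => hGne (by rw [h, mul_zero])
  rw [Matrix.det_fin_two_of, h11, h12, h21, h22]
  rw [div_mul_div_comm]
  rw [show Complex.I * ((2 * (Real.pi : ℂ) * ν) ^ ((1 : ℂ) / 2)) *
        Complex.exp (Complex.I * (Real.pi : ℂ) * ν / 2 + ν - ν * (Real.log |y| : ℂ)) *
        ((2 * (Real.pi : ℂ) * ν) ^ ((1 : ℂ) / 2) *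
        Complex.exp (Complex.I * (Real.pi : ℂ) * ν / 2 - ν + ν * (Real.log |y| : ℂ)))
      = Complex.I * (((2 * (Real.pi : ℂ) * ν) ^ ((1 : ℂ) / 2)) *
          ((2 * (Real.pi : ℂ) * ν) ^ ((1 : ℂ) / 2))) *
        (Complex.exp (Complex.I * (Real.pi : ℂ) * ν / 2 + ν - ν * (Real.log |y| : ℂ)) *
          Complex.exp (Complex.I * (Real.pi : ℂ) * ν / 2 - ν + ν * (Real.log |y| : ℂ))) from by
      ring]
  have hEE : Complex.exp (Complex.I * (Real.pi : ℂ) * ν / 2 + ν - ν * (Real.log |y| : ℂ)) *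
      Complex.exp (Complex.I * (Real.pi : ℂ) * ν / 2 - ν + ν * (Real.log |y| : ℂ)) =
      Complex.exp (Complex.I * (Real.pi : ℂ) * ν) := by
    rw [← Complex.exp_add]; congr 1; ring
  rw [hsq, hEE, hG]
  have hE1 : Complex.exp (-((Real.pi : ℂ) * ν) * Complex.I) =
      (Complex.exp (Complex.I * (Real.pi : ℂ) * ν))⁻¹ := by
    rw [← Complex.exp_neg]; congr 1; ring
  have hE2 : Complex.exp ((Real.pi : ℂ) * ν * Complex.I) =
      Complex.exp (Complex.I * (Real.pi : ℂ) * ν) := by congr 1; ring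
  rw [div_div_eq_mul_div, Complex.sin, hE1, hE2]
  have hEne : Complex.exp (Complex.I * (Real.pi : ℂ) * ν) ≠ 0 := Complex.exp_ne_zero _
  field_simp
  ring_nf
  simp only [Complex.I_sq]
  ring
end

section
/- Let y be a nonzero real number and set ν := i y ∈ ℂ. Define t₁₁ = t₂₂ = exp(i π ν), t₁₂ = i · (2πν)^(1/2) · exp(i π ν/2 + ν − ν · log|y|) / Γ(1 − ν), and t₂₁ = (2πν)^(1/2) · exp(i π ν/2 − ν + ν · log|y|) / Γ(1 + ν), where (·)^(1/2) is the principal complex power, log the real logarithm, and Γ the complex Gamma function. Then |t₁₁|² + sgn(y) · |t₂₁|² = 1 and |t₂₂|² + sgn(y) · |t₁₂|² = 1; explicitly, |t₁₁|² = |t₂₂|² = exp(−2πy) and |t₁₂|² = |t₂₁|² = sgn(y) · (1 − exp(−2πy)). -/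
/-!
The diagonal entries are `exp (-π y)`. For the off-diagonal ones, `|(2πν)^{1/2}|² = 2π|y|`, the
exponential factor has squared modulus `exp (-π y)` (the `log |y|` term is purely imaginary), and
Euler's reflection formula together with `Γ (conj z) = conj (Γ z)` gives
`|Γ (1 ± i y)|² = π y / sinh (π y)`. The product is
`sgn y · 2 exp (-π y) sinh (π y) = sgn y · (1 - exp (-2π y))`, and `sgn y ^ 2 = 1` turns these
moduli into the flux relations.
-/

open scoped Real ComplexConjugate

namespace Complex

lemma norm_cpow_half_sq (z : ℂ) : ‖z ^ ((1 : ℂ) / 2)‖ ^ 2 = ‖z‖ := by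
  rw [← norm_pow, one_div, show (2 : ℂ) = ((2 : ℕ) : ℂ) by norm_num, cpow_nat_inv_pow z two_ne_zero]

lemma norm_exp_sq (w : ℂ) : ‖exp w‖ ^ 2 = Real.exp (2 * w.re) := by
  rw [norm_exp, ← Real.exp_nat_mul]
  norm_num

lemma norm_Gamma_conj (s : ℂ) : ‖Gamma (conj s)‖ = ‖Gamma s‖ := by
  rw [Gamma_conj, norm_conj]

lemma Gamma_one_add_mul_Gamma_one_sub {z : ℂ} (hz : z ≠ 0) :
    Gamma (1 + z) * Gamma (1 - z) = π * z / sin (π * z) := by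
  rw [add_comm, Gamma_add_one z hz, mul_assoc, Gamma_mul_Gamma_one_sub]
  ring

lemma conj_one_add_I_mul (y : ℝ) : conj (1 + I * y) = 1 - I * y := by
  rw [map_add, map_one, map_mul, conj_I, conj_ofReal]; ring

lemma norm_Gamma_one_add_I_mul_sq {y : ℝ} (hy : y ≠ 0) :
    ‖Gamma (1 + I * y)‖ ^ 2 = π * y / Real.sinh (π * y) := by
  have hsin : sin (π * (I * y)) = Real.sinh (π * y) * I := by
    rw [ofReal_sinh, ← sin_mul_I]; push_cast; ring_nf
  have hsinh : (Real.sinh (π * y) : ℂ) ≠ 0 := by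
    exact_mod_cast Real.sinh_ne_zero.mpr (mul_ne_zero Real.pi_ne_zero hy)
  apply ofReal_injective
  rw [ofReal_pow, ← mul_conj', ← Gamma_conj, conj_one_add_I_mul,
    Gamma_one_add_mul_Gamma_one_sub (by simpa using hy), hsin]
  push_cast
  field_simp

end Complex

namespace Real

lemma abs_eq_sign_mul (y : ℝ) : |y| = sign y * y := by
  rcases lt_trichotomy y 0 with h | rfl | h
  · rw [sign_of_neg h, abs_of_neg h]; ring
  · simp
  · rw [sign_of_pos h, abs_of_pos h]; ring

lemma sign_mul_self_of_ne_zero {y : ℝ} (hy : y ≠ 0) : sign y * sign y = 1 := by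
  rcases sign_apply_eq_of_ne_zero y hy with h | h <;> rw [h] <;> norm_num

lemma two_mul_exp_neg_mul_sinh (a : ℝ) : 2 * exp (-a) * sinh a = 1 - exp (-(2 * a)) := by
  have h : exp (-a) * exp a = 1 := by rw [← exp_add, neg_add_cancel, exp_zero]
  rw [sinh_eq, show -(2 * a) = -a + -a by ring, exp_add]
  linear_combination h

lemma two_mul_pi_mul_abs_mul_exp_neg_div_eq_sign_mul {y : ℝ} (hy : y ≠ 0) :
    2 * π * |y| * exp (-(π * y)) / (π * y / sinh (π * y)) =
      sign y * (1 - exp (-(2 * π * y))) := by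
  have hπy : π * y ≠ 0 := mul_ne_zero pi_ne_zero hy
  rw [abs_eq_sign_mul, mul_assoc 2 π y, ← two_mul_exp_neg_mul_sinh]
  field_simp

end Real

/-- Flux-conservation relations for the canonical transition matrix with purely
imaginary Landau–Zener parameter `ν = i y`. -/
theorem canonical_transition_matrix_flux_relations
    (y : ℝ) (hy : y ≠ 0) (ν : ℂ) (hν : ν = Complex.I * (y : ℂ))
    (t₁₁ t₁₂ t₂₁ t₂₂ : ℂ)
    (h11 : t₁₁ = Complex.exp (Complex.I * (Real.pi : ℂ) * ν))
    (h22 : t₂₂ = Complex.exp (Complex.I * (Real.pi : ℂ) * ν))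
    (h12 : t₁₂ = Complex.I * ((2 * (Real.pi : ℂ) * ν) ^ ((1 : ℂ) / 2)) *
        Complex.exp (Complex.I * (Real.pi : ℂ) * ν / 2 + ν - ν * (Real.log |y| : ℂ)) /
          Complex.Gamma (1 - ν))
    (h21 : t₂₁ = ((2 * (Real.pi : ℂ) * ν) ^ ((1 : ℂ) / 2)) *
        Complex.exp (Complex.I * (Real.pi : ℂ) * ν / 2 - ν + ν * (Real.log |y| : ℂ)) /
          Complex.Gamma (1 + ν)) :
    ‖t₁₁‖ ^ 2 + Real.sign y * ‖t₂₁‖ ^ 2 = 1 ∧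
    ‖t₂₂‖ ^ 2 + Real.sign y * ‖t₁₂‖ ^ 2 = 1 ∧
    ‖t₁₁‖ ^ 2 = Real.exp (-(2 * Real.pi * y)) ∧
    ‖t₂₂‖ ^ 2 = Real.exp (-(2 * Real.pi * y)) ∧
    ‖t₁₂‖ ^ 2 = Real.sign y * (1 - Real.exp (-(2 * Real.pi * y))) ∧
    ‖t₂₁‖ ^ 2 = Real.sign y * (1 - Real.exp (-(2 * Real.pi * y))) := by
  subst hν
  have hroot : ‖(2 * (π : ℂ) * (Complex.I * y)) ^ ((1 : ℂ) / 2)‖ ^ 2 = 2 * π * |y| := by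
    rw [Complex.norm_cpow_half_sq]; simp [abs_of_pos Real.pi_pos]
  have hΓ : ‖Complex.Gamma (1 - Complex.I * y)‖ = ‖Complex.Gamma (1 + Complex.I * y)‖ := by
    rw [← Complex.conj_one_add_I_mul, Complex.norm_Gamma_conj]
  have e₁₁ : ‖t₁₁‖ ^ 2 = Real.exp (-(2 * π * y)) := by
    rw [h11, Complex.norm_exp_sq]; congr 1; simp; ring
  have e₂₂ : ‖t₂₂‖ ^ 2 = Real.exp (-(2 * π * y)) := h22 ▸ h11 ▸ e₁₁
  have e₁₂ : ‖t₁₂‖ ^ 2 = Real.sign y * (1 - Real.exp (-(2 * π * y))) := by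
    rw [h12, norm_div, norm_mul, norm_mul, Complex.norm_I, one_mul, hΓ, div_pow, mul_pow, hroot,
      Complex.norm_exp_sq, Complex.norm_Gamma_one_add_I_mul_sq hy,
      ← Real.two_mul_pi_mul_abs_mul_exp_neg_div_eq_sign_mul hy]
    congr 3; simp; ring
  have e₂₁ : ‖t₂₁‖ ^ 2 = Real.sign y * (1 - Real.exp (-(2 * π * y))) := by
    rw [h21, norm_div, norm_mul, div_pow, mul_pow, hroot,
      Complex.norm_exp_sq, Complex.norm_Gamma_one_add_I_mul_sq hy,
      ← Real.two_mul_pi_mul_abs_mul_exp_neg_div_eq_sign_mul hy]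
    congr 3; simp; ring
  have hsign := Real.sign_mul_self_of_ne_zero hy
  refine ⟨?_, ?_, e₁₁, e₂₂, e₁₂, e₂₁⟩
  · rw [e₁₁, e₂₁, ← mul_assoc, hsign]; ring
  · rw [e₂₂, e₁₂, ← mul_assoc, hsign]; ring
end
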